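/- Let H be a connected graph of order n that is not complete. Then for every integer k ≥ 1, the vertex connectivity of the lexicographic power H^k satisfies υ(H^k) = n^{k−1}·υ(H). -/

import Mathlib

open Matrix Finset

universe u

/-- The lexicographic product `H[G]` of two simple graphs. -/
def lexProd {α β : Type u} (H : SimpleGraph α) (G : SimpleGraph β) :
    SimpleGraph (α × β) where
  Adj x y := H.Adj x.1 y.1 ∨ (x.1 = y.1 ∧ G.Adj x.2 y.2)
  symm := ⟨fun x y h => by
    rcases h with h | ⟨h1, h2⟩
    · exact Or.inl (H.adj_symm h)
    · exact Or.inr ⟨h1.symm, G.adj_symm h2⟩⟩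
  loopless := ⟨fun x h => by
    rcases h with h | ⟨_, h2⟩
    · exact H.irrefl h
    · exact G.irrefl h2⟩

/-- Vertex type of the iterated lexicographic product `H^k[G]`. -/
def lexIterVert (α β : Type u) : ℕ → Type u
  | 0 => β
  | k + 1 => α × lexIterVert α β k

/-- Iterated lexicographic product: `H^0[G] = G`, `H^k[G] = H[H^{k-1}[G]]`. -/
def lexIter {α β : Type u} (H : SimpleGraph α) (G : SimpleGraph β) :
    (k : ℕ) → SimpleGraph (lexIterVert α β k)
  | 0 => G
  | k + 1 => lexProd H (lexIter H G k)

instance lexIterVert.instFintype {α β : Type u} [Fintype α] [Fintype β] :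
    ∀ k, Fintype (lexIterVert α β k)
  | 0 => inferInstanceAs (Fintype β)
  | k + 1 =>
      letI := lexIterVert.instFintype (α := α) (β := β) k
      inferInstanceAs (Fintype (α × lexIterVert α β k))

/-- Vertex type of the lexicographic power `H^k` (with `H^0 = K_1`). -/
def powVert (α : Type u) : ℕ → Type u
  | 0 => PUnit
  | 1 => α
  | k + 2 => powVert α (k + 1) × α

/-- Lexicographic powers of a graph: `H^1 = H` and `H^k = H^{k-1}[H]` for `k ≥ 2`. -/
def lexPow {α : Type u} (H : SimpleGraph α) : (k : ℕ) → SimpleGraph (powVert α k)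
  | 0 => ⊥
  | 1 => H
  | k + 2 => lexProd (lexPow H (k + 1)) H

instance powVert.instFintype {α : Type u} [Fintype α] : ∀ k, Fintype (powVert α k)
  | 0 => inferInstanceAs (Fintype PUnit)
  | 1 => inferInstanceAs (Fintype α)
  | k + 2 =>
      letI := powVert.instFintype (α := α) (k + 1)
      inferInstanceAs (Fintype (powVert α (k + 1) × α))

/-- The degree of a vertex. -/
noncomputable def gdeg {α : Type u} [Fintype α] (G : SimpleGraph α) (v : α) : ℕ := by
  classical exact G.degree v

/-- The adjacency spectrum of a graph, as the multiset of roots (eigenvalues, with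
multiplicity) of the characteristic polynomial of its adjacency matrix over `ℝ`. -/
noncomputable def adjSpectrum {α : Type u} [Fintype α] (G : SimpleGraph α) : Multiset ℝ := by
  classical exact (Matrix.charpoly (G.adjMatrix ℝ)).roots

/-- The Laplacian spectrum of a graph, as the multiset of roots (eigenvalues, with
multiplicity) of the characteristic polynomial of its Laplacian matrix over `ℝ`. -/
noncomputable def lapSpectrum {α : Type u} [Fintype α] (G : SimpleGraph α) : Multiset ℝ := by
  classical exact (Matrix.charpoly (G.lapMatrix ℝ)).roots
/-- The vertex connectivity of a graph: the minimum number of vertices whose removal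
yields a disconnected graph. -/
noncomputable def vertConn {α : Type u} [Fintype α] (G : SimpleGraph α) : ℕ :=
  sInf {r | ∃ s : Finset α, s.card = r ∧ ¬ (G.induce ((↑s : Set α)ᶜ)).Connected}

/-!
Deleting whole columns `s ×ˢ β` of `G[H]` deletes the vertices `s` of `G`, so
`υ(G[H]) ≤ υ(G)·|β|`. Conversely, if fewer than `υ(G)·|β|` vertices are deleted, fewer than
`υ(G)` columns disappear entirely; the surviving columns span a connected subgraph of `G` with
at least two vertices (as `υ(G) ≤ |α| - 2` for `G ≠ ⊤`), so every surviving vertex has a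
surviving neighbour in an adjacent column, and all survivors are connected. Hence
`υ(G[H]) = υ(G)·|β|` whenever `G ≠ ⊤`, and the theorem follows by induction on `k`, since
`H^k` is again not complete.
-/

open SimpleGraph

namespace SimpleGraph

theorem Reachable.lift {V W : Type*} {G : SimpleGraph V} {G' : SimpleGraph W} (f : V → W)
    (hf : ∀ a b, G.Adj a b → G'.Reachable (f a) (f b)) {a b : V} (h : G.Reachable a b) :
    G'.Reachable (f a) (f b) := by
  rw [reachable_iff_reflTransGen] at h ⊢
  exact Relation.ReflTransGen.lift' f
    (fun a b hab => (reachable_iff_reflTransGen _ _).1 (hf a b hab)) _ _ h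

theorem Connected.lift {V W : Type*} {G : SimpleGraph V} {G' : SimpleGraph W}
    (hG : G.Connected) (f : V → W) (hf_surj : Function.Surjective f)
    (hf : ∀ a b, G.Adj a b → G'.Reachable (f a) (f b)) : G'.Connected := by
  have : Nonempty W := hG.nonempty.map f
  refine ⟨fun a' b' => ?_⟩
  obtain ⟨a, rfl⟩ := hf_surj a'
  obtain ⟨b, rfl⟩ := hf_surj b'
  exact (hG.preconnected a b).lift f hf

theorem nontrivial_of_ne_top {V : Type*} {G : SimpleGraph V} (hG : G ≠ ⊤) : Nontrivial V :=
  let ⟨a, b, hab, _⟩ := ne_top_iff_exists_not_adj.1 hG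
  ⟨a, b, hab⟩

end SimpleGraph

section VertConn

variable {V : Type u} [Fintype V] {G : SimpleGraph V}

theorem vertConn_le_card {s : Finset V} (h : ¬ (G.induce (↑s : Set V)ᶜ).Connected) :
    vertConn G ≤ #s :=
  Nat.sInf_le (⟨s, rfl, h⟩ : ∃ _, _)

theorem exists_card_eq_vertConn :
    ∃ s : Finset V, #s = vertConn G ∧ ¬ (G.induce (↑s : Set V)ᶜ).Connected :=
  Nat.sInf_mem (s := {r | ∃ s : Finset V, #s = r ∧ ¬ (G.induce (↑s : Set V)ᶜ).Connected})
    ⟨_, univ, rfl, fun h => by obtain ⟨⟨v, hv⟩⟩ := h.nonempty; simp at hv⟩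

theorem connected_induce_compl_of_card_lt_vertConn {s : Finset V} (h : #s < vertConn G) :
    (G.induce (↑s : Set V)ᶜ).Connected := by
  by_contra hs
  exact (vertConn_le_card hs).not_gt h

theorem vertConn_add_two_le_card (hG : G ≠ ⊤) : vertConn G + 2 ≤ Fintype.card V := by
  classical
  obtain ⟨a, b, hab, hnadj⟩ := ne_top_iff_exists_not_adj.1 hG
  have hcard : #(univ \ {a, b}) + 2 = Fintype.card V := by
    rw [card_sdiff_of_subset (subset_univ _), card_univ, card_pair hab]
    have := card_le_univ ({a, b} : Finset V)
    rw [card_pair hab] at this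
    omega
  suffices ¬ (G.induce (↑(univ \ {a, b}) : Set V)ᶜ).Connected by
    have := vertConn_le_card this
    omega
  intro hc
  obtain ⟨w⟩ := hc.preconnected ⟨a, by simp⟩ ⟨b, by simp⟩
  cases w with
  | nil => exact hab rfl
  | @cons _ c _ hadj _ =>
    have hadj : G.Adj a c := hadj
    have hc : (c : V) = a ∨ (c : V) = b := by simpa [or_iff_not_imp_left] using c.2
    rcases hc with hc | hc
    · exact G.irrefl (hc ▸ hadj)
    · exact hnadj (hc ▸ hadj)

end VertConn

section LexProd

variable {α β : Type u} (G : SimpleGraph α) (H : SimpleGraph β)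

theorem lexProd_ne_top [Nonempty α] (hH : H ≠ ⊤) : lexProd G H ≠ ⊤ := by
  obtain ⟨a, b, hab, hnadj⟩ := ne_top_iff_exists_not_adj.1 hH
  obtain ⟨x⟩ := ‹Nonempty α›
  refine ne_top_iff_exists_not_adj.2 ⟨(x, a), (x, b), fun h => hab (congrArg Prod.snd h), ?_⟩
  rintro (h | ⟨-, h⟩)
  · exact G.irrefl h
  · exact hnadj h

variable [Fintype α] [Fintype β]

theorem vertConn_lexProd_le [Nonempty β] :
    vertConn (lexProd G H) ≤ vertConn G * Fintype.card β := by
  classical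
  obtain ⟨s, hs, hdis⟩ := exists_card_eq_vertConn (G := G)
  calc vertConn (lexProd G H) ≤ #(s ×ˢ (univ : Finset β)) := vertConn_le_card ?_
    _ = vertConn G * Fintype.card β := by rw [card_product, hs, card_univ]
  intro hc
  have hmem (p : α × β) : p ∈ (↑(s ×ˢ (univ : Finset β)) : Set (α × β))ᶜ ↔ p.1 ∉ s := by simp
  obtain ⟨y⟩ := ‹Nonempty β›
  refine hdis (hc.lift (fun p => ⟨p.1.1, (hmem _).1 p.2⟩)
    (fun x => ⟨⟨(x.1, y), (hmem _).2 x.2⟩, rfl⟩) ?_)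
  rintro a b (hab | ⟨hab, -⟩)
  · exact Adj.reachable hab
  · simp only [Function.Embedding.coe_subtype] at hab
    simp only [hab]
    rfl

theorem connected_induce_compl_lexProd (hG : G ≠ ⊤) {t : Finset (α × β)}
    (ht : #t < vertConn G * Fintype.card β) :
    ((lexProd G H).induce (↑t : Set (α × β))ᶜ).Connected := by
  classical
  set S : Finset α := {x | ∀ y, (x, y) ∈ t} with hS
  have hSt : #S * Fintype.card β ≤ #t := by
    rw [← card_univ, ← card_product]
    exact card_le_card fun p hp => by simp_all
  have hSκ : #S < vertConn G := lt_of_mul_lt_mul_right (hSt.trans_lt ht) (Nat.zero_le _)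
  have hGS := connected_induce_compl_of_card_lt_vertConn hSκ
  have : Nontrivial ((↑S : Set α)ᶜ : Set α) := by
    have : Sᶜ.Nontrivial := by
      rw [← one_lt_card_iff_nontrivial, card_compl]
      have := vertConn_add_two_le_card hG
      omega
    rw [← coe_compl]
    exact this.coe_sort
  have survivor (x : ((↑S : Set α)ᶜ : Set α)) : ∃ y, ((x : α), y) ∉ t := by
    simpa [hS] using x.2
  choose w hw using survivor
  let rep (x : ((↑S : Set α)ᶜ : Set α)) : ((↑t : Set (α × β))ᶜ : Set (α × β)) :=
    ⟨(x, w x), hw x⟩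
  have hcol (p : ((↑t : Set (α × β))ᶜ : Set (α × β))) : p.1.1 ∉ S := fun hp =>
    p.2 (by simp only [hS, mem_filter, mem_univ, true_and] at hp; exact hp _)
  -- `p` and `rep` of its column are both adjacent to `rep` of a neighbouring column
  have reach_rep (p) : ((lexProd G H).induce _).Reachable p (rep ⟨p.1.1, hcol p⟩) := by
    obtain ⟨x, hx⟩ := hGS.preconnected.exists_adj_of_nontrivial ⟨p.1.1, hcol p⟩
    exact (Adj.reachable (G := (lexProd G H).induce _) (v := rep x) (Or.inl hx)).trans
      (Adj.reachable (Or.inl hx.symm))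
  have : Nonempty ((↑t : Set (α × β))ᶜ : Set (α × β)) := ⟨rep (Classical.arbitrary _)⟩
  refine ⟨fun p q => (reach_rep p).trans (.trans ?_ (reach_rep q).symm)⟩
  exact (hGS.preconnected _ _).lift rep fun a b hab => Adj.reachable (Or.inl hab)

theorem le_vertConn_lexProd (hG : G ≠ ⊤) :
    vertConn G * Fintype.card β ≤ vertConn (lexProd G H) := by
  obtain ⟨t, ht, hdis⟩ := exists_card_eq_vertConn (G := lexProd G H)
  by_contra! h
  exact hdis (connected_induce_compl_lexProd G H hG (ht ▸ h))

theorem vertConn_lexProd [Nonempty β] (hG : G ≠ ⊤) :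
    vertConn (lexProd G H) = vertConn G * Fintype.card β :=
  (vertConn_lexProd_le G H).antisymm (le_vertConn_lexProd G H hG)

end LexProd

section LexPow

variable {α : Type u}

instance powVert.instNonempty [Nonempty α] : ∀ k, Nonempty (powVert α (k + 1))
  | 0 => inferInstanceAs (Nonempty α)
  | k + 1 =>
      have := powVert.instNonempty k
      inferInstanceAs (Nonempty (powVert α (k + 1) × α))

theorem lexPow_succ_ne_top {H : SimpleGraph α} (hH : H ≠ ⊤) : ∀ k, lexPow H (k + 1) ≠ ⊤
  | 0 => hH
  | k + 1 =>
      have := nontrivial_of_ne_top hH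
      lexProd_ne_top (lexPow H (k + 1)) H hH

theorem vertConn_lexPow_succ [Fintype α] {H : SimpleGraph α} (hH : H ≠ ⊤) (k : ℕ) :
    vertConn (lexPow H (k + 1)) = Fintype.card α ^ k * vertConn H := by
  induction k with
  | zero => rw [pow_zero, one_mul]; rfl
  | succ k ih =>
    have := nontrivial_of_ne_top hH
    calc vertConn (lexPow H (k + 2))
        = vertConn (lexPow H (k + 1)) * Fintype.card α :=
          vertConn_lexProd (lexPow H (k + 1)) H (lexPow_succ_ne_top hH k)
      _ = Fintype.card α ^ (k + 1) * vertConn H := by rw [ih]; ring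

end LexPow

theorem vertConn_lexPow_general {α : Type u} [Fintype α]
    (H : SimpleGraph α) (n : ℕ) (hn : Fintype.card α = n)
    (hnc : H ≠ ⊤) :
    ∀ k : ℕ, 1 ≤ k → vertConn (lexPow H k) = n ^ (k - 1) * vertConn H := by
  rintro (_ | k) hk
  · omega
  · subst hn
    exact vertConn_lexPow_succ hnc k

/-- The vertex connectivity of the lexicographic power of a connected
non-complete graph `H` of order `n`: `υ(H^k) = n^(k-1)·υ(H)`. -/
theorem vertConn_lexPow {α : Type u} [Fintype α]
    (H : SimpleGraph α) (n : ℕ) (hn : Fintype.card α = n)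
    (hconn : H.Connected) (hnc : H ≠ ⊤) :
    ∀ k : ℕ, 1 ≤ k → vertConn (lexPow H k) = n ^ (k - 1) * vertConn H :=
  vertConn_lexPow_general H n hn hnc
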